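/- arXiv:1912.06633 — 2 statements merged into one kernel-verified Lean document; each statement's English description precedes it below -/
import Mathlib

section
/- For every real x > 0, with m := tanh(x)/x and p := (1 − tanh(x)² + m)/2, the following chain of inequalities holds: 0 < m², m² < p, p < m, m < min{1, 2p}, min{1,2p} ≤ 2p, and 2p < (1+p)·m. -/
/-!
Write `S = sinh x`, `C = cosh x`. Besides `tanh x < x` and `tanh² x < 1`, the claims become, after
clearing denominators, `x < S C`, `2 S² < x² + x S C` and `2 x² C < x S + S² C`. The first is
`2x < sinh 2x`, the second is `4 cosh u < u² + u sinh u + 4` at `u = 2x`. This and the third are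
the ends of chains of inequalities `g < h` in which `h - g` vanishes at `0` and has positive
derivative by the previous link of the chain.
-/

open Real

lemma lt_of_hasDerivAt_of_pos {f f' : ℝ → ℝ} (hf : ∀ y, HasDerivAt f (f' y) y) {a x : ℝ}
    (hf' : ∀ y, a < y → 0 < f' y) (hax : a < x) : f a < f x := by
  refine strictMonoOn_of_hasDerivWithinAt_pos (convex_Ici a)
    (fun y _ ↦ (hf y).continuousAt.continuousWithinAt) (fun y _ ↦ (hf y).hasDerivWithinAt)
    (fun y hy ↦ hf' y ?_) Set.self_mem_Ici hax.le hax
  simpa using hy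

namespace Real

variable {x : ℝ}

theorem sinh_lt_mul_cosh (hx : 0 < x) : sinh x < x * cosh x := by
  have hd (y : ℝ) : HasDerivAt (fun y ↦ y * cosh y - sinh y) (y * sinh y) y :=
    ((hasDerivAt_id' y).mul (hasDerivAt_cosh y)).sub (hasDerivAt_sinh y) |>.congr_deriv (by ring)
  simpa using lt_of_hasDerivAt_of_pos hd (fun y hy ↦ mul_pos hy (sinh_pos_iff.2 hy)) hx

theorem two_mul_cosh_lt (hx : 0 < x) : 2 * cosh x < x * sinh x + 2 := by
  have hd (y : ℝ) :
      HasDerivAt (fun y ↦ y * sinh y + 2 - 2 * cosh y) (y * cosh y - sinh y) y :=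
    (((hasDerivAt_id' y).mul (hasDerivAt_sinh y)).add_const 2).sub
      ((hasDerivAt_cosh y).const_mul 2) |>.congr_deriv (by ring)
  simpa using lt_of_hasDerivAt_of_pos hd (fun y hy ↦ sub_pos.2 (sinh_lt_mul_cosh hy)) hx

theorem three_mul_sinh_lt (hx : 0 < x) : 3 * sinh x < 2 * x + x * cosh x := by
  have hd (y : ℝ) :
      HasDerivAt (fun y ↦ 2 * y + y * cosh y - 3 * sinh y) (y * sinh y + 2 - 2 * cosh y) y :=
    (((hasDerivAt_id' y).const_mul 2).add ((hasDerivAt_id' y).mul (hasDerivAt_cosh y))).sub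
      ((hasDerivAt_sinh y).const_mul 3) |>.congr_deriv (by ring)
  simpa using lt_of_hasDerivAt_of_pos hd (fun y hy ↦ sub_pos.2 (two_mul_cosh_lt hy)) hx

theorem four_mul_cosh_lt (hx : 0 < x) : 4 * cosh x < x ^ 2 + x * sinh x + 4 := by
  have hd (y : ℝ) : HasDerivAt (fun y ↦ y ^ 2 + y * sinh y + 4 - 4 * cosh y)
      (2 * y + y * cosh y - 3 * sinh y) y :=
    (((hasDerivAt_pow 2 y).add ((hasDerivAt_id' y).mul (hasDerivAt_sinh y))).add_const 4).sub
      ((hasDerivAt_cosh y).const_mul 4) |>.congr_deriv (by norm_num; ring)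
  simpa using lt_of_hasDerivAt_of_pos hd (fun y hy ↦ sub_pos.2 (three_mul_sinh_lt hy)) hx

theorem two_mul_sq_mul_cosh_add_lt (hx : 0 < x) :
    2 * x ^ 2 * cosh x + 7 * x * sinh x < 9 * sinh x ^ 2 * cosh x := by
  have hS : x < sinh x := self_lt_sinh_iff.2 hx
  have hSC : x < sinh x * cosh x := by nlinarith [sinh_pos_iff.2 hx, one_le_cosh x]
  nlinarith [mul_pos (cosh_pos x) (sub_pos.2 (pow_lt_pow_left₀ hS hx.le two_ne_zero)),
    mul_pos (sinh_pos_iff.2 hx) (sub_pos.2 hSC)]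

theorem three_mul_cosh_add_lt (hx : 0 < x) :
    3 * x * cosh x + 2 * x ^ 2 * sinh x < 3 * sinh x * cosh x ^ 2 := by
  have hd (y : ℝ) : HasDerivAt
      (fun y ↦ 3 * sinh y * cosh y ^ 2 - (3 * y * cosh y + 2 * y ^ 2 * sinh y))
      (9 * sinh y ^ 2 * cosh y - (2 * y ^ 2 * cosh y + 7 * y * sinh y)) y := by
    refine (((hasDerivAt_sinh y).const_mul 3).mul ((hasDerivAt_cosh y).pow 2)).sub
      ((((hasDerivAt_id' y).const_mul 3).mul (hasDerivAt_cosh y)).add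
      (((hasDerivAt_pow 2 y).const_mul 2).mul (hasDerivAt_sinh y))) |>.congr_deriv ?_
    norm_num
    linear_combination 3 * cosh y * cosh_sq_sub_sinh_sq y
  simpa using lt_of_hasDerivAt_of_pos hd
    (fun y hy ↦ sub_pos.2 (two_mul_sq_mul_cosh_add_lt hy)) hx

theorem two_mul_sq_mul_cosh_lt (hx : 0 < x) :
    2 * x ^ 2 * cosh x < x * sinh x + sinh x ^ 2 * cosh x := by
  have hd (y : ℝ) : HasDerivAt (fun y ↦ y * sinh y + sinh y ^ 2 * cosh y - 2 * y ^ 2 * cosh y)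
      (3 * sinh y * cosh y ^ 2 - (3 * y * cosh y + 2 * y ^ 2 * sinh y)) y := by
    refine (((hasDerivAt_id' y).mul (hasDerivAt_sinh y)).add
      (((hasDerivAt_sinh y).pow 2).mul (hasDerivAt_cosh y))).sub
      (((hasDerivAt_pow 2 y).const_mul 2).mul (hasDerivAt_cosh y)) |>.congr_deriv ?_
    norm_num
    linear_combination -sinh y * cosh_sq_sub_sinh_sq y
  simpa using lt_of_hasDerivAt_of_pos hd (fun y hy ↦ sub_pos.2 (three_mul_cosh_add_lt hy)) hx

theorem one_sub_tanh_sq (x : ℝ) : 1 - tanh x ^ 2 = (cosh x ^ 2)⁻¹ := by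
  rw [tanh_eq_sinh_div_cosh, div_pow, one_sub_div (pow_pos (cosh_pos x) 2).ne',
    cosh_sq_sub_sinh_sq, one_div]

theorem tanh_lt_self (hx : 0 < x) : tanh x < x := by
  rw [tanh_eq_sinh_div_cosh, div_lt_iff₀ (cosh_pos x)]
  exact sinh_lt_mul_cosh hx

theorem one_sub_tanh_sq_lt_tanh_div (hx : 0 < x) : 1 - tanh x ^ 2 < tanh x / x := by
  have hC := cosh_pos x
  have h := self_lt_sinh_iff.2 (mul_pos two_pos hx)
  rw [sinh_two_mul] at h
  rw [one_sub_tanh_sq, tanh_eq_sinh_div_cosh]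
  field_simp
  linarith

theorem two_mul_tanh_div_sq_lt (hx : 0 < x) :
    2 * (tanh x / x) ^ 2 < 1 - tanh x ^ 2 + tanh x / x := by
  have hC := cosh_pos x
  have h := four_mul_cosh_lt (mul_pos two_pos hx)
  rw [cosh_two_mul, sinh_two_mul] at h
  rw [one_sub_tanh_sq, tanh_eq_sinh_div_cosh]
  field_simp
  linarith [cosh_sq_sub_sinh_sq x]

theorem two_mul_one_sub_tanh_sq_lt (hx : 0 < x) :
    2 * (1 - tanh x ^ 2) < (1 - tanh x ^ 2 + tanh x / x) * (tanh x / x) := by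
  have hC := cosh_pos x
  have h := two_mul_sq_mul_cosh_lt hx
  rw [one_sub_tanh_sq, tanh_eq_sinh_div_cosh]
  field_simp
  linarith

end Real

/-- For every real `x > 0`, with `m := tanh x / x` and
`p := (1 - tanh x ^ 2 + m) / 2`, one has
`0 < m² < p < m < min 1 (2p) ≤ 2p < (1+p)·m`. -/
theorem stmt0 (x m p : ℝ) (hx : 0 < x)
    (hm : m = Real.tanh x / x)
    (hp : p = (1 - Real.tanh x ^ 2 + m) / 2) :
    0 < m ^ 2 ∧ m ^ 2 < p ∧ p < m ∧ m < min 1 (2 * p) ∧ min 1 (2 * p) ≤ 2 * p ∧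
      2 * p < (1 + p) * m := by
  have h₁ := one_sub_tanh_sq_lt_tanh_div hx
  have h₂ := two_mul_tanh_div_sq_lt hx
  have h₃ := two_mul_one_sub_tanh_sq_lt hx
  have h₄ : m < 1 := hm ▸ (div_lt_one hx).2 (tanh_lt_self hx)
  have h₅ := tanh_sq_lt_one x
  rw [← hm] at h₁ h₂ h₃
  subst hp
  refine ⟨pow_pos (by linarith) 2, by linarith, by linarith, lt_min h₄ (by linarith),
    min_le_right _ _, by linarith⟩
end

section
/- For every integer N ≥ 2 and all reals β, v > 0 and b > 0, if βb < λ·((N−1)/N − √(8/(πλ))), then k(λ) − λ/N − ln(cosh(βb)) > 0. -/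
open MeasureTheory ProbabilityTheory Real Set
open scoped NNReal

/-! Evaluating the supremum defining `k(λ)` at `q = 1` and using `ln cosh t ≤ |t|` gives
`k(λ) ≥ λ - √(4λ) 𝔼|X| = λ - √(8λ/π)`, since `𝔼|X| = √(2/π)` for a standard Gaussian `X`.
With `ln cosh (βb) ≤ βb` the hypothesis then yields the claim directly. -/

lemma Real.log_cosh_le_abs (t : ℝ) : log (cosh t) ≤ |t| := by
  have h : cosh t ≤ exp |t| := by
    rw [cosh_eq]
    linarith [exp_le_exp.2 (le_abs_self t), exp_le_exp.2 (neg_le_abs t)]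
  simpa using log_le_log (cosh_pos t) h

lemma integral_Ioi_mul_exp_neg_mul_sq {b : ℝ} (hb : 0 < b) :
    ∫ x in Ioi (0 : ℝ), x * exp (-b * x ^ 2) = (2 * b)⁻¹ := by
  have h := integral_mul_cexp_neg_mul_sq (b := (b : ℂ)) (by simpa using hb)
  push_cast [← Complex.ofReal_pow, ← Complex.ofReal_mul, ← Complex.ofReal_neg,
    ← Complex.ofReal_exp, integral_ofReal] at h
  exact_mod_cast h

lemma integral_abs_gaussianReal (v : ℝ≥0) :
    ∫ x, |x| ∂(gaussianReal 0 v) = √(2 * v / π) := by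
  rcases eq_or_ne v 0 with rfl | hv
  · simp
  rw [integral_gaussianReal_eq_integral_smul hv]
  calc ∫ x, gaussianPDFReal 0 v x • |x|
      = (√(2 * π * v))⁻¹ * ∫ x, (fun t => t * exp (-(2 * (v : ℝ))⁻¹ * t ^ 2)) |x| := by
        rw [← integral_const_mul]
        congr 1 with x
        simp only [gaussianPDFReal, smul_eq_mul, sub_zero, sq_abs]
        ring_nf
    _ = (√(2 * π * v))⁻¹ * (2 * v) := by
        rw [integral_comp_abs (f := fun t => t * exp (-(2 * (v : ℝ))⁻¹ * t ^ 2)),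
          integral_Ioi_mul_exp_neg_mul_sq (by positivity), mul_inv, inv_inv]
        ring
    _ = √(2 * v / π) := by
        rw [show 2 * (v : ℝ) / π = (2 * v) ^ 2 / (2 * π * v) by field_simp,
          sqrt_div (sq_nonneg _), sqrt_sq (by positivity)]
        ring

lemma integral_log_cosh_mul_le (v : ℝ≥0) (c : ℝ) :
    ∫ x, log (cosh (x * c)) ∂(gaussianReal 0 v) ≤ √(2 * v / π) * |c| := by
  have hint : Integrable (fun x : ℝ => |x| * |c|) (gaussianReal 0 v) :=
    ((memLp_id_gaussianReal 1).integrable le_rfl).abs.mul_const _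
  calc ∫ x, log (cosh (x * c)) ∂(gaussianReal 0 v)
      ≤ ∫ x, |x| * |c| ∂(gaussianReal 0 v) :=
        integral_mono_of_nonneg (ae_of_all _ fun x => log_nonneg (one_le_cosh _)) hint
          (ae_of_all _ fun x => (log_cosh_le_abs _).trans_eq (abs_mul x c))
    _ = √(2 * v / π) * |c| := by rw [integral_mul_const, integral_abs_gaussianReal]

/-- `k(λ)` is the supremum of `kObjective λ` over `[0, 1]`. -/
noncomputable def kObjective (lam q : ℝ) : ℝ :=
  lam * (1 - (1 - q) ^ 2) - ∫ x, log (cosh (x * √(4 * lam * q))) ∂(gaussianReal 0 1)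

lemma kObjective_le {lam : ℝ} (hlam : 0 ≤ lam) (q : ℝ) : kObjective lam q ≤ lam := by
  have hI : 0 ≤ ∫ x, log (cosh (x * √(4 * lam * q))) ∂(gaussianReal 0 1) :=
    integral_nonneg fun x => log_nonneg (one_le_cosh _)
  have : lam * (1 - (1 - q) ^ 2) ≤ lam := by nlinarith [sq_nonneg (1 - q)]
  unfold kObjective
  linarith

lemma sub_sqrt_le_kObjective_one (lam : ℝ) : lam - √(8 * lam / π) ≤ kObjective lam 1 := by
  have h := integral_log_cosh_mul_le 1 (√(4 * lam * 1))
  rw [abs_of_nonneg (sqrt_nonneg _), ← sqrt_mul (by positivity),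
    show 2 * ((1 : ℝ≥0) : ℝ) / π * (4 * lam * 1) = 8 * lam / π by push_cast; ring] at h
  unfold kObjective
  linarith

lemma sub_sqrt_le_sSup_kObjective {lam : ℝ} (hlam : 0 ≤ lam) :
    lam - √(8 * lam / π) ≤ sSup (kObjective lam '' Icc 0 1) :=
  (sub_sqrt_le_kObjective_one lam).trans <|
    le_csSup ⟨lam, forall_mem_image.2 fun q _ => kObjective_le hlam q⟩
      (mem_image_of_mem _ (by simp))

lemma mul_sqrt_div_mul_self {lam : ℝ} (hlam : 0 ≤ lam) (a b : ℝ) :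
    lam * √(a / (b * lam)) = √(a * lam / b) := by
  rcases hlam.eq_or_lt with rfl | hlam
  · simp
  rw [← sqrt_sq hlam.le, ← sqrt_mul (sq_nonneg _), sqrt_sq hlam.le]
  congr 1
  field_simp

theorem stmt10_general (N : ℕ) (hN : 2 ≤ N) (β v b : ℝ) (hβ : 0 < β) (hb : 0 < b)
    (lam k : ℝ)
    (hlam : lam = β ^ 2 * v ^ 2 / 4)
    (hk : k = sSup ((fun q : ℝ => lam * (1 - (1 - q) ^ 2) -
        ∫ x, Real.log (Real.cosh (x * Real.sqrt (4 * lam * q))) ∂(gaussianReal 0 1)) ''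
        Set.Icc 0 1))
    (hcond : β * b < lam * (((N : ℝ) - 1) / N - Real.sqrt (8 / (Real.pi * lam)))) :
    0 < k - lam / N - Real.log (Real.cosh (β * b)) := by
  have hlam0 : 0 ≤ lam := hlam ▸ by positivity
  have hk_ge : lam - √(8 * lam / π) ≤ k := hk ▸ sub_sqrt_le_sSup_kObjective hlam0
  have hcosh : log (cosh (β * b)) ≤ β * b :=
    (log_cosh_le_abs _).trans_eq (abs_of_pos (by positivity))
  have hN0 : (N : ℝ) ≠ 0 := Nat.cast_ne_zero.2 (by omega)
  have hsplit : lam * (((N : ℝ) - 1) / N) = lam - lam / N := by field_simp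
  rw [mul_sub, hsplit, mul_sqrt_div_mul_self hlam0] at hcond
  linarith

/-- For `N ≥ 2`, `β, v, b > 0`, `λ := β²v²/4` and
`k(λ) := sup_{q ∈ [0,1]} ( λ(1-(1-q)²) - ∫ ln cosh(x √(4λq)) dγ(x) )`:
if `βb < λ((N-1)/N - √(8/(πλ)))`, then `k(λ) - λ/N - ln cosh(βb) > 0`. -/
theorem stmt10 (N : ℕ) (hN : 2 ≤ N) (β v b : ℝ) (hβ : 0 < β) (hv : 0 < v) (hb : 0 < b)
    (lam k : ℝ)
    (hlam : lam = β ^ 2 * v ^ 2 / 4)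
    (hk : k = sSup ((fun q : ℝ => lam * (1 - (1 - q) ^ 2) -
        ∫ x, Real.log (Real.cosh (x * Real.sqrt (4 * lam * q))) ∂(gaussianReal 0 1)) ''
        Set.Icc 0 1))
    (hcond : β * b < lam * (((N : ℝ) - 1) / N - Real.sqrt (8 / (Real.pi * lam)))) :
    0 < k - lam / N - Real.log (Real.cosh (β * b)) :=
  stmt10_general N hN β v b hβ hb lam k hlam hk hcond
end
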